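/- arXiv:1912.04151 — 2 statements merged into one kernel-verified Lean document; each statement's English description precedes it below -/
import Mathlib

section
/- Suppose for every w_j > 0 and treatment x_j, E[Y_i(t; w_j, 1, x_j)] = E[Y_i(t; w_j, 0, x_j)] (null controlled susceptibility effect). Then F_j(t | x_j) = F_j(t | 1 − x_j) for all t ≥ 0, where F_j(·|x_j) is the CDF of the potential initial infection time W_j(x_j). -/
/-! Once the partner's infection time `wⱼ` is at least `t`, the event `Tᵢ < t` is exactly the
event `Wᵢ < t`, because a transmission from the partner can only happen after time `wⱼ`.
So the null effect at a single such `wⱼ > 0` already equates the CDFs of `Wᵢ(true)` and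
`Wᵢ(false)` at `t`. -/

open MeasureTheory

lemma censored_time_lt_iff {a w z t : ℝ} (hz : 0 ≤ z) (htw : t ≤ w) :
    (if a < w then a else w + z) < t ↔ a < t := by
  split_ifs with haw
  · rfl
  · constructor <;> intro h <;> linarith [not_lt.mp haw]

theorem null_susceptibility_implies_equal_initial_cdf_general
    {Ω : Type*} [MeasurableSpace Ω] (μ : Measure Ω)
    (W : Bool → Ω → ℝ) (Z : ℝ → Bool → Bool → Ω → ℝ)
    (hZ : ∀ wj xi xj ω, 0 ≤ Z wj xi xj ω)
    (T : ℝ → Bool → Bool → Ω → ℝ)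
    (hT : ∀ wj xi xj ω, T wj xi xj ω =
      if W xi ω < wj then W xi ω else wj + Z wj xi xj ω)
    (hSE : ∀ t : ℝ, ∀ wj > (0:ℝ), ∀ xj : Bool,
      μ {ω | T wj true xj ω < t} = μ {ω | T wj false xj ω < t}) :
    ∀ t ≥ (0:ℝ), ∀ xj : Bool, μ {ω | W xj ω < t} = μ {ω | W (!xj) ω < t} := by
  intro t ht xj
  have hevent : ∀ xi, {ω | T (t + 1) xi true ω < t} = {ω | W xi ω < t} := fun xi ↦
    Set.ext fun ω ↦ by
      simp only [Set.mem_ofPred_eq, hT]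
      exact censored_time_lt_iff (hZ _ _ _ _) (by linarith)
  have hcdf := hSE t (t + 1) (by linarith) true
  rw [hevent, hevent] at hcdf
  cases xj
  · exact hcdf.symm
  · exact hcdf

/-- Part of Lemma 4: a null controlled susceptibility effect
(`E[Yᵢ(t;wⱼ,1,xⱼ)] = E[Yᵢ(t;wⱼ,0,xⱼ)]` for all `t`, `wⱼ > 0`, `xⱼ`) forces the
distributions of the potential initial infection times `Wⱼ(1)` and `Wⱼ(0)` to
coincide: `Fⱼ(t|xⱼ) = Fⱼ(t|1−xⱼ)` for all `t ≥ 0`. -/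
theorem null_susceptibility_implies_equal_initial_cdf
    {Ω : Type*} [MeasurableSpace Ω] (μ : Measure Ω) [IsProbabilityMeasure μ]
    (W : Bool → Ω → ℝ) (Z : ℝ → Bool → Bool → Ω → ℝ)
    (hZ : ∀ wj xi xj ω, 0 ≤ Z wj xi xj ω)
    (T : ℝ → Bool → Bool → Ω → ℝ)
    (hT : ∀ wj xi xj ω, T wj xi xj ω =
      if W xi ω < wj then W xi ω else wj + Z wj xi xj ω)
    (hSE : ∀ t : ℝ, ∀ wj > (0:ℝ), ∀ xj : Bool,
      μ {ω | T wj true xj ω < t} = μ {ω | T wj false xj ω < t}) :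
    ∀ t ≥ (0:ℝ), ∀ xj : Bool, μ {ω | W xj ω < t} = μ {ω | W (!xj) ω < t} :=
  null_susceptibility_implies_equal_initial_cdf_general μ W Z hZ T hT hSE
end

section
/- Define k(u) = (E[Y_i(t)|W_j = u, X = (0,0)] − F_i(u|0)) / (1 − F_i(u|0)) for 0 ≤ u < t, where E[Y_i(t)|W_j=u, X] = F_i(u|0) + (1 − F_i(u|0))·k(u) by the identification formula. Suppose the controlled contagion effect is strictly positive: for all 0 ≤ u < u' < t, E[Y_i(t; u, 0)] > E[Y_i(t; u', 0)]. Then k is strictly decreasing on [0,t): k(u) > k(u') for u < u'. -/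
open Set

/-! Since `F + (1 - F) k = k + F (1 - k)` is nondecreasing in `F` when `k ≤ 1`, replacing `Fᵢ(u')`
by the smaller `Fᵢ(u)` in `m(u')` keeps it below `m(u)`; with the same weight `1 - Fᵢ(u) > 0` on both
sides, the comparison of `m` becomes one of `k`. -/

lemma add_one_sub_mul_le_add_one_sub_mul {a b k : ℝ} (hab : a ≤ b) (hk : k ≤ 1) :
    a + (1 - a) * k ≤ b + (1 - b) * k := by
  nlinarith [mul_nonneg (sub_nonneg.2 hab) (sub_nonneg.2 hk)]

lemma lt_of_add_one_sub_mul_lt_add_one_sub_mul {a k k' : ℝ} (ha : a < 1)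
    (h : a + (1 - a) * k' < a + (1 - a) * k) : k' < k :=
  lt_of_mul_lt_mul_left (lt_of_add_lt_add_left h) (sub_nonneg.2 ha.le)

theorem contagion_implies_k_decreasing_general (t : ℝ) (Fi m k : ℝ → ℝ)
    (hFmono : MonotoneOn Fi (Icc 0 t))
    (hF1 : ∀ u, 0 ≤ u → u < t → Fi u < 1)
    (hid : ∀ u, 0 ≤ u → u < t → m u = Fi u + (1 - Fi u) * k u)
    (hk01 : ∀ u, 0 ≤ u → u < t → 0 ≤ k u ∧ k u ≤ 1)
    (hCE : ∀ u u', 0 ≤ u → u < u' → u' < t → m u' < m u) :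
    ∀ u u', 0 ≤ u → u < u' → u' < t → k u' < k u := by
  intro u u' hu huu' hu't
  have hu' : 0 ≤ u' := hu.trans huu'.le
  have hut : u < t := huu'.trans hu't
  have hF : Fi u ≤ Fi u' := hFmono ⟨hu, hut.le⟩ ⟨hu', hu't.le⟩ huu'.le
  refine lt_of_add_one_sub_mul_lt_add_one_sub_mul (hF1 u hu hut) ?_
  calc Fi u + (1 - Fi u) * k u'
      ≤ Fi u' + (1 - Fi u') * k u' :=
        add_one_sub_mul_le_add_one_sub_mul hF (hk01 u' hu' hu't).2
    _ = m u' := (hid u' hu' hu't).symm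
    _ < m u := hCE u u' hu huu' hu't
    _ = Fi u + (1 - Fi u) * k u := hid u hu hut

/-- Monotonicity of `k` (proof of Theorem 4): with
`m(u) = Fᵢ(u) + (1 − Fᵢ(u))k(u)` the identified outcome given the partner infected
at `u`, `Fᵢ` nondecreasing with `Fᵢ < 1` on `[0,t)`, `k ∈ [0,1]`, and a strictly
positive controlled contagion effect (`m(u) > m(u')` for `u < u'`), the conditional
infection probability `k` is strictly decreasing on `[0,t)`. -/
theorem contagion_implies_k_decreasing (t : ℝ) (ht : 0 < t) (Fi m k : ℝ → ℝ)
    (hFmono : MonotoneOn Fi (Icc 0 t))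
    (hF1 : ∀ u, 0 ≤ u → u < t → Fi u < 1)
    (hFnn : ∀ u, 0 ≤ Fi u)
    (hid : ∀ u, 0 ≤ u → u < t → m u = Fi u + (1 - Fi u) * k u)
    (hk01 : ∀ u, 0 ≤ u → u < t → 0 ≤ k u ∧ k u ≤ 1)
    (hCE : ∀ u u', 0 ≤ u → u < u' → u' < t → m u' < m u) :
    ∀ u u', 0 ≤ u → u < u' → u' < t → k u' < k u :=
  contagion_implies_k_decreasing_general t Fi m k hFmono hF1 hid hk01 hCE
end
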